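/- Let n be an odd positive integer, let z := (n+1)/2, and let A ⊆ [n] with z ∉ A. If A and A* are weakly separated, then |A| ≤ (n−1)/2 (equivalently, |A*| ≥ (n+1)/2). -/

import Mathlib

/-!
Write `B = A*`. Both `A \ B = {i ∈ A : n+1-i ∈ A}` and `B \ A = {i ∈ [n] : i, n+1-i ∉ A}` are
symmetric under `i ↦ n+1-i`, and the centre `z` lies in `B \ A`. If `A \ B` is nonempty, symmetry
forces `min (A \ B) < z < max (A \ B)`, so chord separation rules out `min (B \ A) < min (A \ B)`;
hence `A` surrounds `B` and weak separation gives `|A| ≤ |B| = n - |A|`. If `A \ B` is empty this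
inequality holds trivially, and since `n` is odd it means `|A| ≤ (n-1)/2`.
-/

open Finset

/-- The K-involution on subsets of `[n] = {1,…,n}`:
`A* = {i ∈ [n] : n+1−i ∉ A}`. -/
def KInv (n : ℕ) (A : Finset ℕ) : Finset ℕ :=
  (Finset.Icc 1 n).filter (fun i => n + 1 - i ∉ A)

/-- `A` surrounds `B` (requires `B − A ≠ ∅`):
`min(A−B) < min(B−A)` and `max(A−B) > max(B−A)`,
with the conventions `min ∅ = ⊤` and `max ∅ = ⊥`. -/
def Surrounds (A B : Finset ℕ) : Prop :=
  (B \ A).Nonempty ∧ (A \ B).min < (B \ A).min ∧ (B \ A).max < (A \ B).max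

/-- `A` and `B` are chord separated: there are no `i<j<k<l` with `i,k` in one
of `A−B`, `B−A` and `j,l` in the other. -/
def ChordSep (A B : Finset ℕ) : Prop :=
  ¬ ∃ i j k l : ℕ, i < j ∧ j < k ∧ k < l ∧
    ((i ∈ A \ B ∧ k ∈ A \ B ∧ j ∈ B \ A ∧ l ∈ B \ A) ∨
     (i ∈ B \ A ∧ k ∈ B \ A ∧ j ∈ A \ B ∧ l ∈ A \ B))

/-- `A` and `B` are strongly separated: there are no `i<j<k` with `i,k` in one
of `A−B`, `B−A` and `j` in the other. -/
def StrongSep (A B : Finset ℕ) : Prop :=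
  ¬ ∃ i j k : ℕ, i < j ∧ j < k ∧
    ((i ∈ A \ B ∧ k ∈ A \ B ∧ j ∈ B \ A) ∨
     (i ∈ B \ A ∧ k ∈ B \ A ∧ j ∈ A \ B))

/-- `A` and `B` are weakly separated: chord separated, `|A| ≤ |B|` whenever
`A` surrounds `B`, and `|B| ≤ |A|` whenever `B` surrounds `A`. -/
def WeakSep (A B : Finset ℕ) : Prop :=
  ChordSep A B ∧ (Surrounds A B → A.card ≤ B.card) ∧
    (Surrounds B A → B.card ≤ A.card)

namespace Finset

theorem min'_add_max'_eq_of_reflect_mem {n : ℕ} {S : Finset ℕ} (hS : S ⊆ Icc 1 n)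
    (hsymm : ∀ i ∈ S, n + 1 - i ∈ S) (hne : S.Nonempty) :
    S.min' hne + S.max' hne = n + 1 := by
  have hmin := mem_Icc.mp (hS (S.min'_mem hne))
  have hmax := mem_Icc.mp (hS (S.max'_mem hne))
  have h₁ := S.le_max' _ (hsymm _ (S.min'_mem hne))
  have h₂ := S.min'_le _ (hsymm _ (S.max'_mem hne))
  omega

end Finset

theorem surrounds_of_chordSep_of_reflect_mem {A B : Finset ℕ} {n z : ℕ}
    (hAB : A \ B ⊆ Icc 1 n) (hAB_symm : ∀ i ∈ A \ B, n + 1 - i ∈ A \ B)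
    (hBA : B \ A ⊆ Icc 1 n) (hBA_symm : ∀ i ∈ B \ A, n + 1 - i ∈ B \ A)
    (hcentre : n + 1 = 2 * z) (hz : z ∈ B \ A) (hne : (A \ B).Nonempty) (hcs : ChordSep A B) :
    Surrounds A B := by
  have hne' : (B \ A).Nonempty := ⟨z, hz⟩
  set d := (A \ B).min' hne
  set D := (A \ B).max' hne
  set e := (B \ A).min' hne'
  set E := (B \ A).max' hne'
  have hdD : d + D = n + 1 := min'_add_max'_eq_of_reflect_mem hAB hAB_symm hne
  have heE : e + E = n + 1 := min'_add_max'_eq_of_reflect_mem hBA hBA_symm hne'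
  have hd : d ∈ A \ B := min'_mem _ hne
  have hdz : d ≠ z := ne_of_mem_of_not_mem (mem_sdiff.mp hd).1 (mem_sdiff.mp hz).2
  have hde : d ≠ e := ne_of_mem_of_not_mem (mem_sdiff.mp hd).1 (mem_sdiff.mp (min'_mem _ hne')).2
  have hdD_le : d ≤ D := min'_le _ _ (max'_mem _ hne)
  have hd_lt_e : d < e := by
    by_contra! hed
    exact hcs ⟨e, d, z, D, by omega, by omega, by omega,
      Or.inr ⟨min'_mem _ hne', hz, hd, max'_mem _ hne⟩⟩
  refine ⟨hne', ?_, ?_⟩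
  · rw [← coe_min' hne, ← coe_min' hne']
    exact_mod_cast hd_lt_e
  · rw [← coe_max' hne, ← coe_max' hne']
    exact_mod_cast (by omega : E < D)

section KInv

variable {n : ℕ} {A : Finset ℕ}

theorem card_kInv (hA : A ⊆ Icc 1 n) : (KInv n A).card = n - A.card := by
  have hreflect : ((Icc 1 n).filter fun i => n + 1 - i ∈ A).card = A.card := by
    refine card_nbij' (fun i => n + 1 - i) (fun i => n + 1 - i) ?_ ?_ ?_ ?_ <;>
      intro i hi <;> simp only [coe_filter, mem_Icc, Set.mem_ofPred_eq, mem_coe] at hi ⊢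
    · exact hi.2
    · have := mem_Icc.mp (hA hi)
      exact ⟨by omega, by rwa [show n + 1 - (n + 1 - i) = i by omega]⟩
    · omega
    · have := mem_Icc.mp (hA hi)
      omega
  rw [KInv, filter_not, card_sdiff_of_subset (filter_subset _ _), hreflect, Nat.card_Icc,
    Nat.add_sub_cancel]

theorem mem_sdiff_kInv (hA : A ⊆ Icc 1 n) {i : ℕ} :
    i ∈ A \ KInv n A ↔ i ∈ A ∧ n + 1 - i ∈ A := by
  simp only [KInv, mem_sdiff, mem_filter, not_and, not_not]
  exact ⟨fun h => ⟨h.1, h.2 (hA h.1)⟩, fun h => ⟨h.1, fun _ => h.2⟩⟩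

theorem mem_kInv_sdiff {i : ℕ} :
    i ∈ KInv n A \ A ↔ i ∈ Icc 1 n ∧ i ∉ A ∧ n + 1 - i ∉ A := by
  simp only [KInv, mem_sdiff, mem_filter]
  tauto

theorem surrounds_kInv (hA : A ⊆ Icc 1 n) (hodd : Odd n) (hz : (n + 1) / 2 ∉ A)
    (hcs : ChordSep A (KInv n A)) (hne : (A \ KInv n A).Nonempty) :
    Surrounds A (KInv n A) := by
  obtain ⟨k, rfl⟩ := hodd
  refine surrounds_of_chordSep_of_reflect_mem (n := 2 * k + 1) (z := k + 1)
    (fun i hi => hA (mem_sdiff.mp hi).1) (fun i hi => ?_)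
    (fun i hi => (mem_kInv_sdiff.mp hi).1) (fun i hi => ?_) (by omega) ?_ hne hcs
  · rw [mem_sdiff_kInv hA] at hi ⊢
    have := mem_Icc.mp (hA hi.1)
    rw [show 2 * k + 1 + 1 - (2 * k + 1 + 1 - i) = i by omega]
    exact hi.symm
  · obtain ⟨hi, hiA, hiA'⟩ := mem_kInv_sdiff.mp hi
    have := mem_Icc.mp hi
    refine mem_kInv_sdiff.mpr ⟨mem_Icc.mpr ⟨by omega, by omega⟩, hiA', ?_⟩
    rwa [show 2 * k + 1 + 1 - (2 * k + 1 + 1 - i) = i by omega]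
  · have hz' : k + 1 ∉ A := by rwa [show (2 * k + 1 + 1) / 2 = k + 1 by omega] at hz
    refine mem_kInv_sdiff.mpr ⟨mem_Icc.mpr ⟨by omega, by omega⟩, hz', ?_⟩
    rwa [show 2 * k + 1 + 1 - (k + 1) = k + 1 by omega]

end KInv

theorem card_le_of_weakSep_kInv_odd_general
    (n : ℕ) (hodd : Odd n)
    (A : Finset ℕ) (hA : A ⊆ Finset.Icc 1 n) (hz : (n + 1) / 2 ∉ A)
    (hws : WeakSep A (KInv n A)) :
    A.card ≤ (n - 1) / 2 := by
  have hle : A.card ≤ (KInv n A).card := by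
    rcases (A \ KInv n A).eq_empty_or_nonempty with hempty | hne
    · exact card_le_card (sdiff_eq_empty_iff_subset.mp hempty)
    · exact hws.2.1 (surrounds_kInv hA hodd hz hws.1 hne)
  rw [card_kInv hA] at hle
  obtain ⟨k, rfl⟩ := hodd
  omega

/-- For odd `n` and `z = (n+1)/2`, if `A ⊆ [n]` with `z ∉ A` is weakly
separated from `A*`, then `|A| ≤ (n−1)/2`. -/
theorem card_le_of_weakSep_kInv_odd
    (n : ℕ) (hn : 0 < n) (hodd : Odd n)
    (A : Finset ℕ) (hA : A ⊆ Finset.Icc 1 n) (hz : (n + 1) / 2 ∉ A)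
    (hws : WeakSep A (KInv n A)) :
    A.card ≤ (n - 1) / 2 :=
  card_le_of_weakSep_kInv_odd_general n hodd A hA hz hws
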